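/- arXiv:2310.02014 — 3 statements merged into one kernel-verified Lean document; each statement's English description precedes it below -/
import Mathlib

section
/- For a concave, strictly increasing, bounded-above utility U in C^2(ℝ) and X ∈ L^∞, μ_γ(X) → -E[X] as γ → 0+. -/
open MeasureTheory

/-- `μ_γ(X) = -(1/γ) U⁻¹(E[U(γX)])`. -/
noncomputable def mu {Ω : Type*} [MeasurableSpace Ω] (P : Measure Ω)
    (U : ℝ → ℝ) (γ : ℝ) (X : Ω → ℝ) : ℝ :=
  -(1 / γ) * Function.invFun U (∫ ω, U (γ * X ω) ∂P)

/-!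
Since `U⁻¹(E[U(0 · X)]) = 0`, `-μ_γ(X)` is the difference quotient at `0` of
`g(γ) = U⁻¹(E[U(γX)])`, so the limit is `g'(0)` (L'Hôpital's rule). Differentiating under
the integral sign (`X` is essentially bounded and `U'` continuous) gives
`d/dγ E[U(γX)] = U'(0) E[X]` at `0`, and the inverse function theorem gives
`(U⁻¹)'(U 0) = 1 / U'(0)`, so `g'(0) = E[X]`.
-/

section

variable {Ω : Type*} [MeasurableSpace Ω] {P : Measure Ω}

lemma MeasureTheory.MemLp.exists_ae_abs_le {X : Ω → ℝ} (hX : MemLp X ⊤ P) :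
    ∃ M : ℝ, ∀ᵐ ω ∂P, |X ω| ≤ M := by
  have hfin : eLpNormEssSup X P < ⊤ := by simpa only [eLpNorm_exponent_top] using hX.2
  obtain ⟨C, hC⟩ := eLpNormEssSup_lt_top_iff_isBoundedUnder.mp hfin
  exact ⟨C, Filter.eventually_map.mp hC |>.mono fun ω hω => by
    rw [← Real.norm_eq_abs]; exact_mod_cast hω⟩

lemma hasDerivAt_integral_comp_mul [IsFiniteMeasure P] {U : ℝ → ℝ} (hU : ContDiff ℝ 1 U)
    {X : Ω → ℝ} (hX : MemLp X ⊤ P) (γ₀ : ℝ) :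
    HasDerivAt (fun γ => ∫ ω, U (γ * X ω) ∂P)
      (∫ ω, deriv U (γ₀ * X ω) * X ω ∂P) γ₀ := by
  obtain ⟨M, hM⟩ := hX.exists_ae_abs_le
  set K := Set.Icc (-((|γ₀| + 1) * M)) ((|γ₀| + 1) * M)
  have hmem : ∀ᵐ ω ∂P, ∀ γ ∈ Metric.ball γ₀ 1, γ * X ω ∈ K := by
    filter_upwards [hM] with ω hω γ hγ
    have hγ : |γ| ≤ |γ₀| + 1 := by
      have := abs_sub_abs_le_abs_sub γ γ₀
      rw [Metric.mem_ball, Real.dist_eq] at hγ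
      linarith
    rw [Set.mem_Icc, ← abs_le, abs_mul]
    exact mul_le_mul hγ hω (abs_nonneg _) (by positivity)
  have hU' : Continuous (deriv U) := hU.continuous_deriv le_rfl
  obtain ⟨C, hC⟩ := isCompact_Icc.exists_bound_of_continuousOn (s := K) hU'.continuousOn
  obtain ⟨D, hD⟩ :=
    isCompact_Icc.exists_bound_of_continuousOn (s := K) hU.continuous.continuousOn
  have hmeas (γ : ℝ) : AEStronglyMeasurable (fun ω => γ * X ω) P := hX.1.const_mul γ
  have hint : Integrable (fun ω => U (γ₀ * X ω)) P := by
    refine .of_bound (hU.continuous.comp_aestronglyMeasurable (hmeas γ₀)) D ?_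
    filter_upwards [hmem] with ω hω
    exact hD _ (hω γ₀ (Metric.mem_ball_self one_pos))
  have hbound :
      ∀ᵐ ω ∂P, ∀ γ ∈ Metric.ball γ₀ 1, ‖deriv U (γ * X ω) * X ω‖ ≤ C * M := by
    filter_upwards [hmem, hM] with ω hω hXω γ hγ
    rw [norm_mul, Real.norm_eq_abs]
    have hCγ := hC _ (hω γ hγ)
    exact mul_le_mul hCγ hXω (abs_nonneg _) ((norm_nonneg _).trans hCγ)
  have hderiv : ∀ᵐ ω ∂P, ∀ γ ∈ Metric.ball γ₀ 1,
      HasDerivAt (fun γ => U (γ * X ω)) (deriv U (γ * X ω) * X ω) γ :=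
    .of_forall fun ω γ _ =>
      (hU.differentiable one_ne_zero _).hasDerivAt.comp γ (hasDerivAt_mul_const (X ω))
  exact (hasDerivAt_integral_of_dominated_loc_of_deriv_le (Metric.ball_mem_nhds γ₀ one_pos)
    (.of_forall fun γ => hU.continuous.comp_aestronglyMeasurable (hmeas γ)) hint
    ((hU'.comp_aestronglyMeasurable (hmeas γ₀)).mul hX.1) hbound (integrable_const _)
    hderiv).2

end

theorem mu_tendsto_neg_mean_general {Ω : Type*} [MeasurableSpace Ω] (P : Measure Ω)
    [IsProbabilityMeasure P] (U : ℝ → ℝ)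
    (hC2 : ContDiff ℝ 2 U)
    (hmono : StrictMono U)
    (hU'0 : 0 < deriv U 0)
    (X : Ω → ℝ) (hX : MemLp X ⊤ P) :
    Filter.Tendsto (fun γ => mu P U γ X)
      (nhdsWithin 0 (Set.Ioi (0 : ℝ))) (nhds (-∫ ω, X ω ∂P)) := by
  have hU : ContDiff ℝ 1 U := hC2.of_le one_le_two
  have hE : HasDerivAt (fun γ => ∫ ω, U (γ * X ω) ∂P)
      (deriv U 0 * ∫ ω, X ω ∂P) 0 := by
    simpa [integral_const_mul] using hasDerivAt_integral_comp_mul hU hX 0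
  have hE0 : ∫ ω, U (0 * X ω) ∂P = U 0 := by simp
  have hinv : HasStrictDerivAt (Function.invFun U) (deriv U 0)⁻¹ (U 0) :=
    (hU.contDiffAt.hasStrictDerivAt one_ne_zero).to_local_left_inverse hU'0.ne'
      (.of_forall (Function.leftInverse_invFun hmono.injective))
  have hg : HasDerivAt (fun γ => Function.invFun U (∫ ω, U (γ * X ω) ∂P))
      (∫ ω, X ω ∂P) 0 := by
    have := (hE0 ▸ hinv.hasDerivAt).comp 0 hE
    rwa [inv_mul_cancel_left₀ hU'0.ne'] at this
  refine hg.tendsto_slope_zero_right.neg.congr fun γ => ?_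
  simp [mu, Function.leftInverse_invFun hmono.injective 0]

theorem mu_tendsto_neg_mean {Ω : Type*} [MeasurableSpace Ω] (P : Measure Ω)
    [IsProbabilityMeasure P] (U : ℝ → ℝ)
    (hC2 : ContDiff ℝ 2 U) (hconc : ConcaveOn ℝ Set.univ U)
    (hmono : StrictMono U) (hbdd : BddAbove (Set.range U))
    (hU'0 : 0 < deriv U 0)
    (X : Ω → ℝ) (hX : MemLp X ⊤ P) :
    Filter.Tendsto (fun γ => mu P U γ X)
      (nhdsWithin 0 (Set.Ioi (0 : ℝ))) (nhds (-∫ ω, X ω ∂P)) :=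
  mu_tendsto_neg_mean_general P U hC2 hmono hU'0 X hX
end

section
/- Let U be a concave, strictly increasing, bounded-above C^2 utility with U(∞) := lim_{x→∞} U(x), and suppose that for all x₁ > x₂, (U(γx₁) - U(∞))/(U(γx₂) - U(∞)) → 0 as γ → ∞. Then for every X ∈ L^∞, μ_γ(X) → -ess inf X as γ → ∞. -/
/-!
Write `m = essInf X` and `I_γ = E[U(γX)]`, so that `-μ_γ(X) = U⁻¹(I_γ) / γ`. Since `X ≥ m` a.s.,
`I_γ ≥ U(γm)`, i.e. `-μ_γ(X) ≥ m`. Conversely, for `m < c < d` the event `{X ≤ c}` has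
probability `p > 0`, and Markov's inequality applied to `U(∞) - U(γX) ≥ 0` gives
`I_γ - U(∞) ≤ p (U(γc) - U(∞))`. The ratio hypothesis makes the right-hand side eventually
smaller than `U(γd) - U(∞)`, so `-μ_γ(X) ≤ d` for all large `γ`. Concavity makes `U`
continuous, so `U⁻¹` is a genuine inverse on `[U(γm), U(γd)]`.
-/

open MeasureTheory

open Filter Set Topology Function

theorem StrictMono.lt_of_tendsto_atTop {U : ℝ → ℝ} {L : ℝ} (hU : StrictMono U)
    (h : Tendsto U atTop (𝓝 L)) (x : ℝ) : U x < L :=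
  (hU (lt_add_one x)).trans_le (hU.monotone.ge_of_tendsto h _)

theorem Function.invFun_mem_Icc_of_strictMono {U : ℝ → ℝ} (hUc : Continuous U)
    (hU : StrictMono U) {a b y : ℝ} (hab : a ≤ b) (hy : y ∈ Icc (U a) (U b)) :
    invFun U y ∈ Icc a b := by
  obtain ⟨x, -, hx⟩ := intermediate_value_Icc hab hUc.continuousOn hy
  have hinv : U (invFun U y) = y := invFun_eq ⟨x, hx⟩
  rw [← hinv] at hy
  exact ⟨hU.le_iff_le.1 hy.1, hU.le_iff_le.1 hy.2⟩

section

variable {Ω : Type*} [MeasurableSpace Ω] {P : Measure Ω} {U : ℝ → ℝ} {X : Ω → ℝ}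

theorem MeasureTheory.MemLp.isBoundedUnder_ge_ae (hX : MemLp X ⊤ P) : IsBoundedUnder (· ≥ ·) (ae P) X :=
  isBoundedUnder_of_eventually_ge <|
    (ae_le_lpNorm_exponent_top hX).mono fun _ h => (abs_le.1 h).1

theorem MeasureTheory.MemLp.isCoboundedUnder_ge_ae [NeZero P] (hX : MemLp X ⊤ P) :
    IsCoboundedUnder (· ≥ ·) (ae P) X :=
  isCoboundedUnder_ge_of_eventually_le _ <|
    (ae_le_lpNorm_exponent_top hX).mono fun _ h => (abs_le.1 h).2

theorem measure_setOf_le_ne_zero_of_essInf_lt (hX : IsCoboundedUnder (· ≥ ·) (ae P) X)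
    {c : ℝ} (hc : essInf X P < c) : P {ω | X ω ≤ c} ≠ 0 := by
  intro h0
  have hae : ∀ᵐ ω ∂P, c < X ω := by
    rw [ae_iff]
    simpa only [not_lt] using h0
  exact (le_essInf_of_ae_le c (hae.mono fun _ => le_of_lt) hX).not_gt hc

theorem integrable_comp_const_mul_of_memLp_top [IsFiniteMeasure P] (hUc : Continuous U)
    (hU : Monotone U) (hX : MemLp X ⊤ P) (γ : ℝ) : Integrable (fun ω => U (γ * X ω)) P := by
  set L := lpNorm X ⊤ P
  refine .of_bound (hUc.comp_aestronglyMeasurable (hX.1.const_mul γ))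
    (max |U (-(|γ| * L))| |U (|γ| * L)|) ?_
  filter_upwards [ae_le_lpNorm_exponent_top hX] with ω hω
  have hγX : |γ * X ω| ≤ |γ| * L := by
    rw [abs_mul]
    exact mul_le_mul_of_nonneg_left hω (abs_nonneg γ)
  obtain ⟨hl, hr⟩ := abs_le.1 hγX
  exact abs_le_max_abs_abs (hU hl) (hU hr)

theorem le_integral_comp_const_mul_of_ae_le [IsProbabilityMeasure P] (hU : Monotone U)
    {γ a : ℝ} (hγ : 0 ≤ γ) (hint : Integrable (fun ω => U (γ * X ω)) P)
    (ha : ∀ᵐ ω ∂P, a ≤ X ω) : U (γ * a) ≤ ∫ ω, U (γ * X ω) ∂P := by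
  calc U (γ * a) = ∫ _, U (γ * a) ∂P := by simp
    _ ≤ ∫ ω, U (γ * X ω) ∂P :=
      integral_mono_ae (integrable_const _) hint
        (ha.mono fun _ h => hU (mul_le_mul_of_nonneg_left h hγ))

theorem sub_mul_measureReal_le_sub_integral [IsProbabilityMeasure P] (hU : Monotone U)
    {Uinf : ℝ} (hUle : ∀ x, U x ≤ Uinf) {γ : ℝ} (hγ : 0 ≤ γ)
    (hint : Integrable (fun ω => U (γ * X ω)) P) (c : ℝ) :
    (Uinf - U (γ * c)) * P.real {ω | X ω ≤ c} ≤ Uinf - ∫ ω, U (γ * X ω) ∂P := by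
  calc (Uinf - U (γ * c)) * P.real {ω | X ω ≤ c}
      ≤ (Uinf - U (γ * c)) * P.real {ω | Uinf - U (γ * c) ≤ Uinf - U (γ * X ω)} :=
        mul_le_mul_of_nonneg_left
          (measureReal_mono fun ω (hω : X ω ≤ c) =>
            sub_le_sub_left (hU (mul_le_mul_of_nonneg_left hω hγ)) Uinf)
          (sub_nonneg.2 (hUle _))
    _ ≤ ∫ ω, (Uinf - U (γ * X ω)) ∂P :=
        mul_meas_ge_le_integral_of_nonneg (ae_of_all _ fun _ => sub_nonneg.2 (hUle _))
          ((integrable_const Uinf).sub hint) _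
    _ = Uinf - ∫ ω, U (γ * X ω) ∂P := by
        rw [integral_sub (integrable_const _) hint]
        simp

theorem neg_mu_mem_Icc (hUc : Continuous U) (hU : StrictMono U) {γ a b : ℝ} (hγ : 0 < γ)
    (hab : a ≤ b) (hI : ∫ ω, U (γ * X ω) ∂P ∈ Icc (U (γ * a)) (U (γ * b))) :
    -mu P U γ X ∈ Icc a b := by
  obtain ⟨h₁, h₂⟩ :=
    invFun_mem_Icc_of_strictMono hUc hU (mul_le_mul_of_nonneg_left hab hγ.le) hI
  have hmu : -mu P U γ X = invFun U (∫ ω, U (γ * X ω) ∂P) / γ := by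
    rw [mu]
    ring
  rw [hmu]
  exact ⟨(le_div_iff₀ hγ).2 (by linarith), (div_le_iff₀ hγ).2 (by linarith)⟩

theorem eventually_neg_mu_mem_Icc [IsProbabilityMeasure P] (hUc : Continuous U)
    (hU : StrictMono U) {Uinf : ℝ} (hUinf : Tendsto U atTop (𝓝 Uinf))
    (hratio : ∀ x₁ x₂ : ℝ, x₂ < x₁ →
      Tendsto (fun γ => (U (γ * x₁) - Uinf) / (U (γ * x₂) - Uinf)) atTop (𝓝 0))
    (hX : MemLp X ⊤ P) {d : ℝ} (hd : essInf X P < d) :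
    ∀ᶠ γ in atTop, -mu P U γ X ∈ Icc (essInf X P) d := by
  obtain ⟨c, hmc, hcd⟩ := exists_between hd
  have hp : 0 < P.real {ω | X ω ≤ c} :=
    ENNReal.toReal_pos (measure_setOf_le_ne_zero_of_essInf_lt hX.isCoboundedUnder_ge_ae hmc)
      (measure_ne_top _ _)
  filter_upwards [eventually_gt_atTop 0, (hratio d c hcd).eventually_lt_const hp]
    with γ hγ hrat
  have hint := integrable_comp_const_mul_of_memLp_top hUc hU.monotone hX γ
  have hlow : U (γ * essInf X P) ≤ ∫ ω, U (γ * X ω) ∂P :=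
    le_integral_comp_const_mul_of_ae_le hU.monotone hγ.le hint
      (ae_essInf_le hX.isBoundedUnder_ge_ae)
  have hup : ∫ ω, U (γ * X ω) ∂P ≤ U (γ * d) := by
    have hmarkov := sub_mul_measureReal_le_sub_integral hU.monotone
      (fun x => (hU.lt_of_tendsto_atTop hUinf x).le) hγ.le hint c
    have hden : U (γ * c) - Uinf < 0 := sub_neg.2 (hU.lt_of_tendsto_atTop hUinf _)
    have hsmall := (div_lt_iff_of_neg hden).1 hrat
    linarith
  exact neg_mu_mem_Icc hUc hU hγ (hmc.trans hcd).le ⟨hlow, hup⟩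

end

theorem mu_tendsto_neg_essInf_general {Ω : Type*} [MeasurableSpace Ω] (P : Measure Ω)
    [IsProbabilityMeasure P] (U : ℝ → ℝ)
    (hconc : ConcaveOn ℝ Set.univ U)
    (hmono : StrictMono U)
    (Uinf : ℝ) (hUinf : Filter.Tendsto U Filter.atTop (nhds Uinf))
    (hratio : ∀ x₁ x₂ : ℝ, x₂ < x₁ →
      Filter.Tendsto (fun γ => (U (γ * x₁) - Uinf) / (U (γ * x₂) - Uinf))
        Filter.atTop (nhds 0))
    (X : Ω → ℝ) (hX : MemLp X ⊤ P) :
    Filter.Tendsto (fun γ => mu P U γ X) Filter.atTop (nhds (-essInf X P)) := by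
  have hUc : Continuous U := continuousOn_univ.1 (hconc.continuousOn isOpen_univ)
  have hneg : Tendsto (fun γ => -mu P U γ X) atTop (𝓝 (essInf X P)) := by
    refine tendsto_order.2 ⟨fun a ha => ?_, fun b hb => ?_⟩
    · filter_upwards [eventually_neg_mu_mem_Icc hUc hmono hUinf hratio hX (lt_add_one _)]
        with γ hγ
      exact ha.trans_le hγ.1
    · obtain ⟨d, hmd, hdb⟩ := exists_between hb
      filter_upwards [eventually_neg_mu_mem_Icc hUc hmono hUinf hratio hX hmd] with γ hγ
      exact hγ.2.trans_lt hdb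
  simpa using hneg.neg

theorem mu_tendsto_neg_essInf {Ω : Type*} [MeasurableSpace Ω] (P : Measure Ω)
    [IsProbabilityMeasure P] (U : ℝ → ℝ)
    (hC2 : ContDiff ℝ 2 U) (hconc : ConcaveOn ℝ Set.univ U)
    (hmono : StrictMono U) (hbdd : BddAbove (Set.range U))
    (Uinf : ℝ) (hUinf : Filter.Tendsto U Filter.atTop (nhds Uinf))
    (hratio : ∀ x₁ x₂ : ℝ, x₂ < x₁ →
      Filter.Tendsto (fun γ => (U (γ * x₁) - Uinf) / (U (γ * x₂) - Uinf))
        Filter.atTop (nhds 0))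
    (X : Ω → ℝ) (hX : MemLp X ⊤ P) :
    Filter.Tendsto (fun γ => mu P U γ X) Filter.atTop (nhds (-essInf X P)) :=
  mu_tendsto_neg_essInf_general P U hconc hmono Uinf hUinf hratio X hX
end

section
/- The utility-based acceptability index α satisfies quasi-concavity: for X, Y ∈ L^∞ and λ ∈ [0,1], α(λX + (1-λ)Y) ≥ min(α(X), α(Y)). -/
open MeasureTheory ENNReal

/-- Utility-based acceptability index `α(X) = sup {γ > 0 : μ_γ(X) ≤ 0}`,
with values in `[0, ∞]` and `sup ∅ = 0`. -/
noncomputable def alpha {Ω : Type*} [MeasurableSpace Ω] (P : Measure Ω)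
    (U : ℝ → ℝ) (X : Ω → ℝ) : ℝ≥0∞ :=
  ⨆ γ ∈ {γ : ℝ | 0 < γ ∧ mu P U γ X ≤ 0}, ENNReal.ofReal γ

/-!
Fix a scale `γ > 0`. For bounded `X` the expectation `E[U(γX)]` lies in the range of `U`
(intermediate value theorem), so `U⁻¹` is a genuine inverse there and `μ_γ(X) ≤ 0` says exactly
`U 0 ≤ E[U(γX)]`. By concavity of `U` this condition is preserved under convex combinations.
Scale aversion regularity (monotonicity of `γ ↦ μ_γ(X)`) shows that `γ < α(X)` forces
`μ_γ(X) ≤ 0`; hence every `γ < min (α X) (α Y)` is accepted for both `X` and `Y`, so also for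
`λX + (1-λ)Y`, and `γ ≤ α(λX + (1-λ)Y)`.
-/

section

variable {Ω : Type*} [MeasurableSpace Ω] {P : Measure Ω} {U : ℝ → ℝ} {X : Ω → ℝ}

lemma integrable_comp_of_memLp_top [IsFiniteMeasure P] (hUc : Continuous U) (hU : Monotone U)
    (hX : MemLp X ∞ P) : Integrable (fun ω => U (X ω)) P := by
  set M := lpNorm X ∞ P
  refine .of_bound (hUc.comp_aestronglyMeasurable hX.aestronglyMeasurable)
    (max |U (-M)| |U M|) ?_
  filter_upwards [ae_le_lpNorm_exponent_top hX] with ω hω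
  obtain ⟨hlo, hhi⟩ := abs_le.1 hω
  rw [Real.norm_eq_abs, abs_le]
  constructor
  · exact (neg_le_neg (le_max_of_le_left (neg_le_abs _))).trans (by simpa using hU hlo)
  · exact (hU hhi).trans (le_max_of_le_right (le_abs_self _))

lemma integral_comp_mem_range [IsProbabilityMeasure P] (hUc : Continuous U) (hU : Monotone U)
    (hX : MemLp X ∞ P) : ∫ ω, U (X ω) ∂P ∈ Set.range U := by
  set M := lpNorm X ∞ P
  have hbound := ae_le_lpNorm_exponent_top hX
  have hint := integrable_comp_of_memLp_top hUc hU hX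
  have hlo : U (-M) ≤ ∫ ω, U (X ω) ∂P := by
    simpa using integral_mono_ae (integrable_const (U (-M))) hint <| by
      filter_upwards [hbound] with ω hω using hU (abs_le.1 hω).1
  have hhi : ∫ ω, U (X ω) ∂P ≤ U M := by
    simpa using integral_mono_ae hint (integrable_const (U M)) <| by
      filter_upwards [hbound] with ω hω using hU (abs_le.1 hω).2
  exact (isPreconnected_range hUc).Icc_subset ⟨-M, rfl⟩ ⟨M, rfl⟩ ⟨hlo, hhi⟩

lemma mu_nonpos_iff [IsProbabilityMeasure P] (hUc : Continuous U) (hU : StrictMono U)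
    {γ : ℝ} (hγ : 0 < γ) (hX : MemLp X ∞ P) :
    mu P U γ X ≤ 0 ↔ U 0 ≤ ∫ ω, U (γ * X ω) ∂P := by
  obtain ⟨t, ht⟩ := integral_comp_mem_range hUc hU.monotone (hX.const_mul γ)
  rw [mu, ← ht, Function.leftInverse_invFun hU.injective t, hU.le_iff_le, neg_mul, neg_nonpos]
  exact mul_nonneg_iff_of_pos_left (one_div_pos.2 hγ)

theorem convex_setOf_mu_nonpos [IsProbabilityMeasure P] (hUc : Continuous U)
    (hU : StrictMono U) (hconc : ConcaveOn ℝ Set.univ U) {γ : ℝ} (hγ : 0 < γ) :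
    Convex ℝ {X : Ω → ℝ | MemLp X ∞ P ∧ mu P U γ X ≤ 0} := by
  rintro X ⟨hX, hμX⟩ Y ⟨hY, hμY⟩ a b ha hb hab
  have hZ : MemLp (a • X + b • Y) ∞ P := (hX.const_smul a).add (hY.const_smul b)
  refine ⟨hZ, ?_⟩
  rw [mu_nonpos_iff hUc hU hγ hX] at hμX
  rw [mu_nonpos_iff hUc hU hγ hY] at hμY
  rw [mu_nonpos_iff hUc hU hγ hZ]
  have hint : ∀ {W : Ω → ℝ}, MemLp W ∞ P → Integrable (fun ω => U (γ * W ω)) P :=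
    fun hW => integrable_comp_of_memLp_top hUc hU.monotone (hW.const_mul γ)
  have hpointwise : ∀ ω, a * U (γ * X ω) + b * U (γ * Y ω) ≤ U (γ * (a • X + b • Y) ω) := by
    intro ω
    have h := hconc.2 (Set.mem_univ (γ * X ω)) (Set.mem_univ (γ * Y ω)) ha hb hab
    simp only [smul_eq_mul] at h
    simpa only [Pi.add_apply, Pi.smul_apply, smul_eq_mul, mul_add, mul_left_comm γ] using h
  calc U 0 = a * U 0 + b * U 0 := by rw [← add_mul, hab, one_mul]
    _ ≤ a * ∫ ω, U (γ * X ω) ∂P + b * ∫ ω, U (γ * Y ω) ∂P := by gcongr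
    _ = ∫ ω, a * U (γ * X ω) + b * U (γ * Y ω) ∂P := by
      rw [integral_add ((hint hX).const_mul a) ((hint hY).const_mul b), integral_const_mul,
        integral_const_mul]
    _ ≤ ∫ ω, U (γ * (a • X + b • Y) ω) ∂P :=
      integral_mono (((hint hX).const_mul a).add ((hint hY).const_mul b)) (hint hZ) hpointwise

lemma ofReal_le_alpha {γ : ℝ} (hγ : 0 < γ) (hμ : mu P U γ X ≤ 0) :
    ENNReal.ofReal γ ≤ alpha P U X :=
  le_iSup₂ (f := fun γ (_ : γ ∈ {γ : ℝ | 0 < γ ∧ mu P U γ X ≤ 0}) => ENNReal.ofReal γ) γ ⟨hγ, hμ⟩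

lemma mu_nonpos_of_ofReal_lt_alpha (hreg : MonotoneOn (fun γ => mu P U γ X) (Set.Ioi 0))
    {γ : ℝ} (hγ : 0 < γ) (hlt : ENNReal.ofReal γ < alpha P U X) : mu P U γ X ≤ 0 := by
  obtain ⟨γ', ⟨hγ', hμ⟩, hγγ'⟩ := lt_biSup_iff.1 hlt
  exact (hreg hγ hγ' ((ENNReal.ofReal_lt_ofReal_iff hγ').1 hγγ').le).trans hμ

end

theorem alpha_quasiConcave_general {Ω : Type*} [MeasurableSpace Ω] (P : Measure Ω)
    [IsProbabilityMeasure P] (U : ℝ → ℝ)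
    (hconc : ConcaveOn ℝ Set.univ U)
    (hmono : StrictMono U)
    (hreg : ∀ (X : Ω → ℝ), MemLp X ⊤ P → ∀ γ₁ γ₂ : ℝ, 0 < γ₁ → γ₁ ≤ γ₂ →
      mu P U γ₁ X ≤ mu P U γ₂ X)
    (X Y : Ω → ℝ) (hX : MemLp X ⊤ P) (hY : MemLp Y ⊤ P)
    (lam : ℝ) (hlam : lam ∈ Set.Icc (0 : ℝ) 1) :
    min (alpha P U X) (alpha P U Y) ≤
      alpha P U (fun ω => lam * X ω + (1 - lam) * Y ω) := by
  have hUc : Continuous U := continuousOn_univ.1 (hconc.continuousOn isOpen_univ)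
  have hregOn : ∀ W, MemLp W ⊤ P → MonotoneOn (fun γ => mu P U γ W) (Set.Ioi 0) :=
    fun W hW _ ha _ _ hab => hreg W hW _ _ ha hab
  refine ENNReal.le_of_forall_pos_nnreal_lt fun r hr hlt => ?_
  have hr' : (0 : ℝ) < r := hr
  rw [← ENNReal.ofReal_coe_nnreal] at hlt ⊢
  obtain ⟨hltX, hltY⟩ := lt_min_iff.1 hlt
  have hmem := convex_setOf_mu_nonpos hUc hmono hconc hr'
    ⟨hX, mu_nonpos_of_ofReal_lt_alpha (hregOn X hX) hr' hltX⟩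
    ⟨hY, mu_nonpos_of_ofReal_lt_alpha (hregOn Y hY) hr' hltY⟩ hlam.1 (sub_nonneg.2 hlam.2)
    (add_sub_cancel lam 1)
  exact ofReal_le_alpha hr' hmem.2

theorem alpha_quasiConcave {Ω : Type*} [MeasurableSpace Ω] (P : Measure Ω)
    [IsProbabilityMeasure P] (U : ℝ → ℝ)
    (hC2 : ContDiff ℝ 2 U) (hconc : ConcaveOn ℝ Set.univ U)
    (hmono : StrictMono U) (hbdd : BddAbove (Set.range U))
    (hreg : ∀ (X : Ω → ℝ), MemLp X ⊤ P → ∀ γ₁ γ₂ : ℝ, 0 < γ₁ → γ₁ ≤ γ₂ →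
      mu P U γ₁ X ≤ mu P U γ₂ X)
    (X Y : Ω → ℝ) (hX : MemLp X ⊤ P) (hY : MemLp Y ⊤ P)
    (lam : ℝ) (hlam : lam ∈ Set.Icc (0 : ℝ) 1) :
    min (alpha P U X) (alpha P U Y) ≤
      alpha P U (fun ω => lam * X ω + (1 - lam) * Y ω) :=
  alpha_quasiConcave_general P U hconc hmono hreg X Y hX hY lam hlam
end
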